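/- In the shrinkage prior setup with a ∈ (0,1) and L satisfying Assumption 1, there exist a constant A₀ ≥ 1 and a function ε : (0,1) → ℝ with ε(τ) → 0 as τ → 0⁺ such that for every τ ∈ (0,1) and every w ≥ 0, the posterior shrinkage weight satisfies R(τ, w) ≤ (A₀ K / (a(1−a))) · τ^{2a} L(τ^{−2}) · exp(w/2) · (1 + ε(τ)). (Lemma 3, case 0 < a < 1.) -/

import Mathlib

/-!
Since `L ≤ M` and `exp (-κ w / 2) ≤ 1`, the numerator of `R(τ, w)` is bounded, uniformly in `τ`
and `w`, by `M` times the Beta integral `∫₀¹ κ^(a-1) (1-κ)^(-a) dκ`, which is finite because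
`0 < a < 1`. For the denominator put `T = t₀ τ²`: when `T ≤ 1/4`, on the window
`1 - κ ∈ [T, 2T]` the argument of `L` is at least `t₀`, so `L ≥ c₀` there and the density is
at least a constant times `e^(-w/2) T^(-a-1)`. Integrating over the window, of length `T`, gives a
denominator of order `e^(-w/2) τ^(-2a)`, hence `R ≤ B τ^(2a) e^(w/2)`, and `B` is absorbed
into `A₀` because `L(τ⁻²) ≥ c₀`. For the remaining `τ` one only has `R ≤ 1`, and `ε(τ)` is
chosen large enough there; it vanishes near `0`.
-/

open Filter MeasureTheory

/-- Unnormalized posterior density of the shrinkage coefficient `κ ∈ (0,1)`: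
`π(κ; τ, w) = κ^(a+m/2-1) (1-κ)^(-a-1) L(τ⁻²(κ⁻¹-1)) exp(-κw/2)`. -/
noncomputable def postDensity (a : ℝ) (m : ℕ) (L : ℝ → ℝ) (τ w κ : ℝ) : ℝ :=
  κ ^ (a + (m : ℝ) / 2 - 1) * (1 - κ) ^ (-a - 1) * L ((κ⁻¹ - 1) / τ ^ 2) *
    Real.exp (-(κ * w) / 2)

/-- Posterior shrinkage weight `R(τ, w) = E(1 - κ | τ, w)`. -/
noncomputable def shrinkWeight (a : ℝ) (m : ℕ) (L : ℝ → ℝ) (τ w : ℝ) : ℝ :=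
  (∫ κ in (0 : ℝ)..1, (1 - κ) * postDensity a m L τ w κ) /
    ∫ κ in (0 : ℝ)..1, postDensity a m L τ w κ

open Real Set

theorem intervalIntegrable_rpow_mul_one_sub_rpow {p q : ℝ} (hp : -1 < p) (hq : -1 < q) :
    IntervalIntegrable (fun x : ℝ => x ^ p * (1 - x) ^ q) volume 0 1 := by
  have hleft : IntervalIntegrable (fun x : ℝ => x ^ p * (1 - x) ^ q) volume 0 (1 / 2) := by
    refine (intervalIntegral.intervalIntegrable_rpow' hp).mul_continuousOn ?_
    refine ContinuousOn.rpow_const (by fun_prop) fun x hx => Or.inl ?_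
    rw [uIcc_of_le (by norm_num)] at hx
    linarith [hx.2]
  have hright : IntervalIntegrable (fun x : ℝ => x ^ p * (1 - x) ^ q) volume (1 / 2) 1 := by
    have h := (intervalIntegral.intervalIntegrable_rpow' hq (a := 1 / 2) (b := 0)).comp_sub_left 1
    norm_num at h
    refine h.continuousOn_mul (ContinuousOn.rpow_const continuousOn_id fun x hx => Or.inl ?_)
    rw [uIcc_of_le (by norm_num)] at hx
    exact (by linarith [hx.1] : (0 : ℝ) < x).ne'
  exact hleft.trans hright

theorem rpow_abs_le_rpow {b x : ℝ} (p : ℝ) (hb : 0 < b) (hbx : b ≤ x) (hx : x ≤ 1) :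
    b ^ |p| ≤ x ^ p := by
  rcases le_or_gt 0 p with hp | hp
  · rw [abs_of_nonneg hp]
    exact rpow_le_rpow hb.le hbx hp
  · calc b ^ |p| ≤ 1 := rpow_le_one hb.le (hbx.trans hx) (abs_nonneg p)
      _ ≤ x ^ p := one_le_rpow_of_pos_of_le_one_of_nonpos (hb.trans_le hbx) hx hp.le

theorem setIntegral_one_sub_mul_div_le_one {f : ℝ → ℝ} (hf : ∀ x ∈ Ioo (0 : ℝ) 1, 0 ≤ f x) :
    (∫ x in Ioo 0 1, (1 - x) * f x) / ∫ x in Ioo 0 1, f x ≤ 1 := by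
  by_cases hfi : IntegrableOn f (Ioo 0 1)
  · refine div_le_one_of_le₀ (integral_mono_of_nonneg ?_ hfi ?_)
      (setIntegral_nonneg measurableSet_Ioo hf)
    · filter_upwards [ae_restrict_mem measurableSet_Ioo] with x hx
      exact mul_nonneg (by linarith [hx.2]) (hf x hx)
    · filter_upwards [ae_restrict_mem measurableSet_Ioo] with x hx
      exact mul_le_of_le_one_left (hf x hx) (by linarith [hx.1])
  · rw [integral_undef hfi, div_zero]
    exact zero_le_one

theorem mul_sub_le_setIntegral {f : ℝ → ℝ} {s : Set ℝ} {c x y : ℝ} (hs : MeasurableSet s)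
    (hxy : x ≤ y) (hsub : Icc x y ⊆ s) (hf : ∀ z ∈ s, 0 ≤ f z) (hfi : IntegrableOn f s)
    (hc : ∀ z ∈ Icc x y, c ≤ f z) :
    c * (y - x) ≤ ∫ z in s, f z := by
  have hIcc := setIntegral_ge_of_const_le measurableSet_Icc measure_Icc_lt_top.ne hc
    (hfi.mono_set hsub)
  rw [Measure.real, Real.volume_Icc, ENNReal.toReal_ofReal (sub_nonneg.2 hxy), smul_eq_mul,
    mul_comm] at hIcc
  exact hIcc.trans (setIntegral_mono_set hfi ((ae_restrict_iff' hs).2 (ae_of_all _ hf))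
    hsub.eventuallyLE)

theorem exists_one_le_and_le_mul_div_mul (B : ℝ) {K d c : ℝ} (hK : 0 < K) (hd : 0 < d)
    (hc : 0 < c) : ∃ A₀ : ℝ, 1 ≤ A₀ ∧ B ≤ A₀ * K / d * c := by
  refine ⟨max 1 (B * d / (K * c)), le_max_left _ _, ?_⟩
  rw [show max 1 (B * d / (K * c)) * K / d * c = max 1 (B * d / (K * c)) * (K * c) / d by ring,
    le_div_iff₀ hd, ← div_le_iff₀ (by positivity)]
  exact le_max_right _ _

theorem one_le_mul_mul_one_add_inv {x y : ℝ} (hx : 0 < x) (hy : 1 ≤ y) :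
    1 ≤ x * y * (1 + x⁻¹) := by
  rw [mul_one_add, mul_right_comm, mul_inv_cancel₀ hx.ne', one_mul]
  nlinarith

theorem tendsto_ite_mul_sq_le_one (c : ℝ) (g : ℝ → ℝ) :
    Tendsto (fun τ => if c * τ ^ 2 ≤ 1 then 0 else g τ) (nhds 0) (nhds 0) := by
  have h : Tendsto (fun τ : ℝ => c * τ ^ 2) (nhds 0) (nhds 0) :=
    (by fun_prop : Continuous fun τ : ℝ => c * τ ^ 2).tendsto' 0 0 (by simp)
  refine tendsto_nhds_of_eventually_eq ?_
  filter_upwards [h.eventually (ge_mem_nhds one_pos)] with τ hτ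
  rw [if_pos hτ]

section postDensity

variable {a : ℝ} {m : ℕ} {L : ℝ → ℝ} {τ w κ : ℝ}

theorem shrinkWeight_eq :
    shrinkWeight a m L τ w = (∫ κ in Ioo 0 1, (1 - κ) * postDensity a m L τ w κ) /
      ∫ κ in Ioo 0 1, postDensity a m L τ w κ := by
  simp only [shrinkWeight, intervalIntegral.integral_of_le zero_le_one,
    integral_Ioc_eq_integral_Ioo]

theorem inv_sub_one_div_sq_pos (hτ : τ ≠ 0) (hκ : κ ∈ Ioo (0 : ℝ) 1) :
    0 < (κ⁻¹ - 1) / τ ^ 2 :=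
  div_pos (sub_pos.2 (one_lt_inv₀ hκ.1 |>.2 hκ.2)) (by positivity)

theorem postDensity_pos (hL : ∀ x > 0, 0 < L x) (hτ : τ ≠ 0) (hκ : κ ∈ Ioo (0 : ℝ) 1) :
    0 < postDensity a m L τ w κ := by
  have := hL _ (inv_sub_one_div_sq_pos hτ hκ)
  have := rpow_pos_of_pos hκ.1 (a + (m : ℝ) / 2 - 1)
  have := rpow_pos_of_pos (sub_pos.2 hκ.2) (-a - 1)
  unfold postDensity
  positivity

theorem shrinkWeight_le_one (hL : ∀ x > 0, 0 < L x) (hτ : τ ≠ 0) :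
    shrinkWeight a m L τ w ≤ 1 := by
  rw [shrinkWeight_eq]
  exact setIntegral_one_sub_mul_div_le_one fun κ hκ => (postDensity_pos hL hτ hκ).le

theorem one_sub_mul_postDensity_le {M : ℝ} (hL : ∀ x > 0, 0 < L x) (hLM : ∀ x > 0, L x ≤ M)
    (hτ : τ ≠ 0) (hw : 0 ≤ w) (hκ : κ ∈ Ioo (0 : ℝ) 1) :
    (1 - κ) * postDensity a m L τ w κ ≤ M * (κ ^ (a - 1) * (1 - κ) ^ (-a)) := by
  obtain ⟨hκ0, hκ1⟩ := hκ
  have h1κ : 0 < 1 - κ := sub_pos.2 hκ1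
  have harg := inv_sub_one_div_sq_pos hτ ⟨hκ0, hκ1⟩
  have hpow : (1 - κ) * (1 - κ) ^ (-a - 1) = (1 - κ) ^ (-a) := by
    rw [rpow_sub_one h1κ.ne', mul_div_cancel₀ _ h1κ.ne']
  have hLexp : L ((κ⁻¹ - 1) / τ ^ 2) * exp (-(κ * w) / 2) ≤ M :=
    (mul_le_of_le_one_right (hL _ harg).le
      (exp_le_one_iff.2 (by nlinarith))).trans (hLM _ harg)
  have hκpow : κ ^ (a + (m : ℝ) / 2 - 1) ≤ κ ^ (a - 1) :=
    rpow_le_rpow_of_exponent_ge hκ0 hκ1.le (by linarith [(Nat.cast_nonneg m : (0 : ℝ) ≤ m)])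
  calc (1 - κ) * postDensity a m L τ w κ
      = κ ^ (a + (m : ℝ) / 2 - 1) * (1 - κ) ^ (-a) *
          (L ((κ⁻¹ - 1) / τ ^ 2) * exp (-(κ * w) / 2)) := by
        rw [← hpow, postDensity]; ring
    _ ≤ κ ^ (a - 1) * (1 - κ) ^ (-a) * M := by
        have := rpow_pos_of_pos h1κ (-a)
        have := hL _ harg
        gcongr
    _ = M * (κ ^ (a - 1) * (1 - κ) ^ (-a)) := by ring

theorem setIntegral_one_sub_mul_postDensity_le {M : ℝ} (ha0 : 0 < a) (ha1 : a < 1)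
    (hL : ∀ x > 0, 0 < L x) (hLM : ∀ x > 0, L x ≤ M) (hτ : τ ≠ 0) (hw : 0 ≤ w) :
    ∫ κ in Ioo 0 1, (1 - κ) * postDensity a m L τ w κ ≤
      M * ∫ κ in Ioo 0 1, κ ^ (a - 1) * (1 - κ) ^ (-a) := by
  rw [← integral_const_mul]
  refine integral_mono_of_nonneg ?_ ?_ ?_
  · filter_upwards [ae_restrict_mem measurableSet_Ioo] with κ hκ
    exact mul_nonneg (sub_pos.2 hκ.2).le (postDensity_pos hL hτ hκ).le
  · exact ((intervalIntegrable_iff_integrableOn_Ioo_of_le zero_le_one).1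
      (intervalIntegrable_rpow_mul_one_sub_rpow (by linarith) (by linarith))).const_mul M
  · filter_upwards [ae_restrict_mem measurableSet_Ioo] with κ hκ
    exact one_sub_mul_postDensity_le hL hLM hτ hw hκ

theorem le_postDensity {c s : ℝ} (ha : 0 < a) (hw : 0 ≤ w) (hc : 0 ≤ c) (hκ : 1 / 2 ≤ κ)
    (hκ1 : κ < 1) (hs : 1 - κ ≤ s) (hL : c ≤ L ((κ⁻¹ - 1) / τ ^ 2)) :
    (1 / 2) ^ |a + (m : ℝ) / 2 - 1| * s ^ (-a - 1) * c * exp (-w / 2) ≤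
      postDensity a m L τ w κ := by
  unfold postDensity
  have h1κ : 0 < 1 - κ := sub_pos.2 hκ1
  have := rpow_pos_of_pos (h1κ.trans_le hs) (-a - 1)
  have := rpow_pos_of_pos (by linarith : (0 : ℝ) < κ) (a + (m : ℝ) / 2 - 1)
  have := hc.trans hL
  have hκpow := rpow_abs_le_rpow (a + (m : ℝ) / 2 - 1) (by norm_num) hκ hκ1.le
  have h1κpow : s ^ (-a - 1) ≤ (1 - κ) ^ (-a - 1) :=
    rpow_le_rpow_of_nonpos h1κ hs (by linarith)
  have hexp : exp (-w / 2) ≤ exp (-(κ * w) / 2) := exp_le_exp.2 (by nlinarith)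
  gcongr

theorem mul_le_setIntegral_postDensity {c₀ t₀ : ℝ} (ha : 0 < a) (hL : ∀ x > 0, 0 < L x)
    (hLlow : ∀ t ≥ t₀, c₀ ≤ L t) (hc₀ : 0 ≤ c₀) (ht₀ : 0 < t₀) (hτ : 0 < τ) (hw : 0 ≤ w)
    (hsmall : 4 * (t₀ * τ ^ 2) ≤ 1) (hint : IntegrableOn (postDensity a m L τ w) (Ioo 0 1)) :
    (1 / 2) ^ |a + (m : ℝ) / 2 - 1| * (2 * (t₀ * τ ^ 2)) ^ (-a - 1) * c₀ * exp (-w / 2) *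
        (t₀ * τ ^ 2) ≤ ∫ κ in Ioo 0 1, postDensity a m L τ w κ := by
  set T := t₀ * τ ^ 2 with hT
  have hT0 : 0 < T := by positivity
  have hbound : ∀ κ ∈ Icc (1 - 2 * T) (1 - T), (1 / 2) ^ |a + (m : ℝ) / 2 - 1| *
      (2 * T) ^ (-a - 1) * c₀ * exp (-w / 2) ≤ postDensity a m L τ w κ := by
    rintro κ ⟨hκl, hκr⟩
    have hκinv : 1 + T ≤ κ⁻¹ := by
      rw [← one_div, le_div_iff₀ (by linarith)]
      nlinarith
    refine le_postDensity ha hw hc₀ (by linarith) (by linarith) (by linarith) (hLlow _ ?_)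
    rw [ge_iff_le, le_div_iff₀ (by positivity), ← hT]
    linarith
  have h := mul_sub_le_setIntegral measurableSet_Ioo (by linarith)
    (fun κ hκ => ⟨by linarith [hκ.1], by linarith [hκ.2]⟩)
    (fun κ hκ => (postDensity_pos hL hτ.ne' hκ).le) hint hbound
  rwa [show 1 - T - (1 - 2 * T) = T by ring] at h

end postDensity

theorem exists_shrinkWeight_le_rpow_mul_exp {a c₀ t₀ M : ℝ} {L : ℝ → ℝ} (ha0 : 0 < a)
    (ha1 : a < 1) (hL : ∀ x > 0, 0 < L x) (hLM : ∀ x > 0, L x ≤ M) (hc₀ : 0 < c₀)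
    (ht₀ : 0 < t₀) (hLlow : ∀ t ≥ t₀, c₀ ≤ L t) (m : ℕ) :
    ∃ B, ∀ τ > 0, 4 * (t₀ * τ ^ 2) ≤ 1 → ∀ w ≥ 0,
      shrinkWeight a m L τ w ≤ B * τ ^ (2 * a) * exp (w / 2) := by
  set N := M * ∫ κ in Ioo 0 1, κ ^ (a - 1) * (1 - κ) ^ (-a)
  obtain ⟨p, hp, hpdef⟩ : ∃ p : ℝ, 0 < p ∧ p = (1 / 2) ^ |a + (m : ℝ) / 2 - 1| :=
    ⟨_, by positivity, rfl⟩
  have hN : 0 ≤ N := mul_nonneg ((hL 1 one_pos).le.trans (hLM 1 one_pos))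
    (setIntegral_nonneg measurableSet_Ioo fun κ hκ =>
      mul_nonneg (rpow_nonneg hκ.1.le _) (rpow_nonneg (sub_pos.2 hκ.2).le _))
  refine ⟨N / (p * c₀ / 2) * (2 * t₀) ^ a, fun τ hτ hsmall w hw => ?_⟩
  rw [shrinkWeight_eq]
  by_cases hint : IntegrableOn (postDensity a m L τ w) (Ioo 0 1)
  · have hτpow : (τ ^ 2) ^ a = τ ^ (2 * a) := by
      rw [← rpow_natCast, ← rpow_mul hτ.le]
      norm_num
    have hden : p * (2 * (t₀ * τ ^ 2)) ^ (-a - 1) * c₀ *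
        exp (-w / 2) * (t₀ * τ ^ 2) = p * c₀ / 2 / ((2 * t₀) ^ a * τ ^ (2 * a) * exp (w / 2)) := by
      rw [rpow_sub_one (by positivity), rpow_neg (by positivity),
        mul_rpow zero_le_two (mul_pos ht₀ (pow_pos hτ 2)).le, mul_rpow ht₀.le (sq_nonneg τ),
        mul_rpow zero_le_two ht₀.le, hτpow, neg_div, exp_neg]
      field_simp
    have hlow := mul_le_setIntegral_postDensity ha0 hL hLlow hc₀.le ht₀ hτ hw hsmall hint
    rw [← hpdef, hden] at hlow
    calc _ ≤ N / (p * c₀ / 2 / ((2 * t₀) ^ a * τ ^ (2 * a) * exp (w / 2))) :=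
          div_le_div₀ hN (setIntegral_one_sub_mul_postDensity_le ha0 ha1 hL hLM hτ.ne' hw)
            (by positivity) hlow
      _ = N / (p * c₀ / 2) * (2 * t₀) ^ a * τ ^ (2 * a) * exp (w / 2) := by
        field_simp
  · rw [integral_undef hint, div_zero]
    positivity

theorem lemma3_shrinkWeight_upper_bound_lt_one_general
    (a : ℝ) (ha0 : 0 < a) (ha1 : a < 1) (m : ℕ)
    (L : ℝ → ℝ) (hLpos : ∀ x > 0, 0 < L x)
    (c₀ t₀ : ℝ) (hc₀ : 0 < c₀) (ht₀ : 0 < t₀) (hLlow : ∀ t ≥ t₀, c₀ ≤ L t)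
    (M : ℝ) (hLup : ∀ t > 0, L t ≤ M)
    (K : ℝ) (hK : 0 < K) :
    ∃ A₀ : ℝ, 1 ≤ A₀ ∧ ∃ ε : ℝ → ℝ,
      Tendsto ε (nhdsWithin 0 (Set.Ioi 0)) (nhds 0) ∧
      ∀ τ ∈ Set.Ioo (0 : ℝ) 1, ∀ w ≥ (0 : ℝ),
        shrinkWeight a m L τ w ≤
          A₀ * K / (a * (1 - a)) * (τ ^ (2 * a) * L (1 / τ ^ 2)) * Real.exp (w / 2) *
            (1 + ε τ) := by
  obtain ⟨B, hB⟩ := exists_shrinkWeight_le_rpow_mul_exp ha0 ha1 hLpos hLup hc₀ ht₀ hLlow m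
  have ha : 0 < a * (1 - a) := mul_pos ha0 (sub_pos.2 ha1)
  obtain ⟨A₀, hA₀, hBA₀⟩ := exists_one_le_and_le_mul_div_mul B hK ha hc₀
  set C := A₀ * K / (a * (1 - a))
  have hC : 0 < C := div_pos (mul_pos (one_pos.trans_le hA₀) hK) ha
  refine ⟨A₀, hA₀, fun τ => if 4 * (t₀ * τ ^ 2) ≤ 1 then 0 else
    (C * (τ ^ (2 * a) * L (1 / τ ^ 2)))⁻¹, ?_, ?_⟩
  · simpa only [mul_assoc] using
      (tendsto_ite_mul_sq_le_one (4 * t₀) _).mono_left nhdsWithin_le_nhds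
  rintro τ ⟨hτ0, -⟩ w hw
  have hX : 0 < τ ^ (2 * a) * L (1 / τ ^ 2) :=
    mul_pos (rpow_pos_of_pos hτ0 _) (hLpos _ (by positivity))
  dsimp only
  split_ifs with hsmall
  · calc shrinkWeight a m L τ w ≤ B * τ ^ (2 * a) * exp (w / 2) := hB τ hτ0 hsmall w hw
      _ ≤ C * c₀ * τ ^ (2 * a) * exp (w / 2) := by gcongr
      _ ≤ C * L (1 / τ ^ 2) * τ ^ (2 * a) * exp (w / 2) := by
        gcongr
        exact hLlow _ (by rw [ge_iff_le, le_div_iff₀ (by positivity)]; linarith)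
      _ = _ := by ring
  · exact (shrinkWeight_le_one hLpos hτ0.ne').trans
      (one_le_mul_mul_one_add_inv (mul_pos hC hX) (one_le_exp (by positivity)))

/-- **Lemma 3, case `0 < a < 1`.** In the shrinkage prior setup with `a ∈ (0,1)` and `L` satisfying
Assumption 1, there exist a constant `A₀ ≥ 1` and a function `ε : (0,1) → ℝ` with `ε(τ) → 0` as
`τ → 0⁺` such that for every `τ ∈ (0,1)` and every `w ≥ 0`,
`R(τ, w) ≤ (A₀ K / (a(1-a))) · τ^(2a) L(τ⁻²) · exp(w/2) · (1 + ε(τ))`. -/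
theorem lemma3_shrinkWeight_upper_bound_lt_one
    (a : ℝ) (ha0 : 0 < a) (ha1 : a < 1) (m : ℕ) (hm : 1 ≤ m)
    (L : ℝ → ℝ) (hLmeas : Measurable L) (hLpos : ∀ x > 0, 0 < L x)
    (hLsv : ∀ c > 0, Tendsto (fun x => L (c * x) / L x) atTop (nhds 1))
    (c₀ t₀ : ℝ) (hc₀ : 0 < c₀) (ht₀ : 0 < t₀) (hLlow : ∀ t ≥ t₀, c₀ ≤ L t)
    (M : ℝ) (hLup : ∀ t > 0, L t ≤ M)
    (K : ℝ) (hK : 0 < K)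
    (hLint : IntegrableOn (fun t : ℝ => t ^ (-a - 1) * L t) (Set.Ioi 0))
    (hKval : ∫ t in Set.Ioi (0 : ℝ), t ^ (-a - 1) * L t = 1 / K) :
    ∃ A₀ : ℝ, 1 ≤ A₀ ∧ ∃ ε : ℝ → ℝ,
      Tendsto ε (nhdsWithin 0 (Set.Ioi 0)) (nhds 0) ∧
      ∀ τ ∈ Set.Ioo (0 : ℝ) 1, ∀ w ≥ (0 : ℝ),
        shrinkWeight a m L τ w ≤
          A₀ * K / (a * (1 - a)) * (τ ^ (2 * a) * L (1 / τ ^ 2)) * Real.exp (w / 2) *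
            (1 + ε τ) :=
  lemma3_shrinkWeight_upper_bound_lt_one_general a ha0 ha1 m L hLpos c₀ t₀ hc₀ ht₀ hLlow M hLup K hK
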